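/- arXiv:2401.07737 — 7 statements merged into one kernel-verified Lean document; each statement's English description precedes it below -/
import Mathlib

section
/- Let Γ = Γ₁ × Γ₂ act on a product space X₁ × X₂, where Γᵢ acts on Xᵢ, and Xᵢ are compact metrizable. Then the limit set of Γ in X₁ × X₂ equals (L₁ × X₂) ∪ (X₁ × L₂), where Lᵢ is the limit set of Γᵢ in Xᵢ. -/
open Filter

/-- The limit set of a subset `H ⊆ G` acting on `X`. -/
def limitSet {G X : Type*} [Group G] [TopologicalSpace X] [MulAction G X]
    (H : Set G) : Set X :=
  {x : X | ∃ (y : X) (γ : ℕ → G), (∀ j, γ j ∈ H) ∧ Function.Injective γ ∧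
    Tendsto (fun j => γ j • y) atTop (nhds x)}

lemma inj_tendsto_atTop {h : ℕ → ℕ} (hi : Function.Injective h) :
    Tendsto h atTop atTop := by
  rw [← Nat.cofinite_eq_atTop]
  exact hi.tendsto_cofinite

/-- the limit set of a product group Γ₁ × Γ₂ acting componentwise on a
product X₁ × X₂ of compact metrizable spaces is (L₁ × X₂) ∪ (X₁ × L₂). -/
theorem stmt_2 {G₁ G₂ X₁ X₂ : Type*} [Group G₁] [Group G₂]
    [TopologicalSpace X₁] [TopologicalSpace X₂]
    [CompactSpace X₁] [CompactSpace X₂]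
    [TopologicalSpace.MetrizableSpace X₁] [TopologicalSpace.MetrizableSpace X₂]
    [MulAction G₁ X₁] [MulAction G₂ X₂]
    (Γ₁ : Subgroup G₁) (Γ₂ : Subgroup G₂) :
    {x : X₁ × X₂ | ∃ (y : X₁ × X₂) (γ : ℕ → G₁ × G₂),
      (∀ j, γ j ∈ Γ₁.prod Γ₂) ∧ Function.Injective γ ∧
      Tendsto (fun j => (((γ j).1 • y.1 : X₁), ((γ j).2 • y.2 : X₂))) atTop (nhds x)}
    = (limitSet (X := X₁) (Γ₁ : Set G₁)) ×ˢ (Set.univ : Set X₂)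
      ∪ (Set.univ : Set X₁) ×ˢ (limitSet (X := X₂) (Γ₂ : Set G₂)) := by
  ext x
  simp only [Set.mem_setOf_eq, Set.mem_union, Set.mem_prod, Set.mem_univ, and_true, true_and]
  constructor
  · rintro ⟨y, γ, hmem, hinj, hconv⟩
    have hconv1 : Tendsto (fun j => (γ j).1 • y.1) atTop (nhds x.1) :=
      (continuous_fst.tendsto x).comp hconv
    have hconv2 : Tendsto (fun j => (γ j).2 • y.2) atTop (nhds x.2) :=
      (continuous_snd.tendsto x).comp hconv
    by_cases hfin : (Set.range fun j => (γ j).1).Finite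
    · right
      -- some fiber of the first component is infinite
      have hpig : ∃ a, {j | (γ j).1 = a}.Infinite := by
        by_contra hcon
        push_neg at hcon
        have : (Set.univ : Set ℕ).Finite := by
          have hsub : (Set.univ : Set ℕ) ⊆
              ⋃ a ∈ Set.range (fun j => (γ j).1), {j | (γ j).1 = a} := by
            intro j _
            exact Set.mem_biUnion (Set.mem_range_self j) rfl
          exact Set.Finite.subset (Set.Finite.biUnion hfin (fun a _ => hcon a)) hsub
        exact Set.infinite_univ this
      obtain ⟨a, ha⟩ := hpig
      have ha' : (setOf fun j => (γ j).1 = a).Infinite := ha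
      set p : ℕ → Prop := fun j => (γ j).1 = a with hp
      have hmono : StrictMono (Nat.nth p) := Nat.nth_strictMono ha'
      have hmemp : ∀ n, (γ (Nat.nth p n)).1 = a := fun n => Nat.nth_mem_of_infinite ha' n
      refine ⟨y.2, fun n => (γ (Nat.nth p n)).2, fun n => (hmem _).2, ?_, ?_⟩
      · intro m n hmn
        have : γ (Nat.nth p m) = γ (Nat.nth p n) := by
          ext
          · rw [hmemp m, hmemp n]
          · exact hmn
        exact hmono.injective (hinj this)
      · exact hconv2.comp hmono.tendsto_atTop
    · left
      have hinf : (Set.range fun j => (γ j).1).Infinite := hfin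
      let e := hinf.natEmbedding
      have hch : ∀ n, ∃ j, (γ j).1 = (e n : G₁) := fun n => (e n).2
      choose h hh using hch
      have hcompinj : Function.Injective (fun n => (γ (h n)).1) := by
        intro m n hmn
        simp only [hh m, hh n] at hmn
        exact e.injective (Subtype.val_injective hmn)
      have hhinj : Function.Injective h := fun m n hmn => hcompinj (by simp [hmn])
      refine ⟨y.1, fun n => (γ (h n)).1, fun n => (hmem _).1, hcompinj, ?_⟩
      exact hconv1.comp (inj_tendsto_atTop hhinj)
  · rintro (⟨y1, γ1, hm, hi, hc⟩ | ⟨y2, γ2, hm, hi, hc⟩)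
    · refine ⟨(y1, x.2), fun j => (γ1 j, 1), fun j => ⟨hm j, Subgroup.one_mem _⟩,
        fun m n hmn => hi (congrArg Prod.fst hmn), ?_⟩
      simp only [one_smul]
      have : nhds x = nhds (x.1, x.2) := by rw [Prod.mk.eta]
      rw [this]
      exact hc.prodMk_nhds tendsto_const_nhds
    · refine ⟨(x.1, y2), fun j => (1, γ2 j), fun j => ⟨Subgroup.one_mem _, hm j⟩,
        fun m n hmn => hi (congrArg Prod.snd hmn), ?_⟩
      simp only [one_smul]
      have : nhds x = nhds (x.1, x.2) := by rw [Prod.mk.eta]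
      rw [this]
      exact tendsto_const_nhds.prodMk_nhds hc
end

section
/- An automorphism of finite order of a tree fixes a vertex or an edge (an inversion of an edge counts as fixing the edge). -/
/-!
Choose a vertex `x` of least displacement `d = dist(x, φ x)` and let `p` be the geodesic from `x`
to `φ x`. If `p` folds back at its end, i.e. its penultimate vertex is the image of its second
vertex, then either `d ≤ 1`, which gives a fixed vertex or an inverted edge, or the second vertex
of `p` is displaced by only `d - 2`, contradicting minimality. Otherwise the concatenation
`p, φ p, φ² p, …` never backtracks, so in a tree it is a path and `φᵏ x ≠ x` for all `k > 0`.
-/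

namespace SimpleGraph

variable {V : Type*} {G : SimpleGraph V}

theorem IsAcyclic.isPath_append (hG : G.IsAcyclic) {u v w : V} {p : G.Walk u v}
    {q : G.Walk v w} (hp : p.IsPath) (hq : q.IsPath) (hpq : p.penultimate ≠ q.snd) :
    (p.append q).IsPath := by
  rw [hG.isPath_iff_isChain, Walk.edges_append, List.isChain_append]
  refine ⟨(hG.isPath_iff_isChain p).1 hp, (hG.isPath_iff_isChain q).1 hq, fun a ha b hb => ?_⟩
  have hpe : p.edges ≠ [] := by rintro h; simp [h] at ha
  have hqe : q.edges ≠ [] := by rintro h; simp [h] at hb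
  rw [List.getLast?_eq_some_getLast hpe, Option.mem_some_iff,
    Walk.getLast_edges_eq_mk_penultimate_end] at ha
  rw [List.head?_eq_some_head hqe, Option.mem_some_iff, Walk.head_edges_eq_mk_start_snd] at hb
  subst ha hb
  rw [ne_eq, Sym2.eq_iff]
  grind

namespace Walk

theorem snd_append_of_not_nil {u v w : V} {p : G.Walk u v} (hp : ¬p.Nil) (q : G.Walk v w) :
    (p.append q).snd = p.snd := by
  cases p with
  | nil => exact absurd nil_nil hp
  | cons h p => simp [cons_append]

theorem not_nil_of_penultimate_ne {u : V} {f : V → V} {p : G.Walk u (f u)}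
    (h : p.penultimate ≠ f p.snd) : ¬p.Nil := by
  intro hnil
  have hlen : p.length = 0 := length_eq_zero_iff.mpr hnil
  have hfix : u = f u := hnil.eq
  rw [penultimate, hlen, getVert_zero, snd, getVert_of_length_le _ (by omega)] at h
  exact h (by rw [← hfix, ← hfix])

theorem dist_snd_penultimate_le {u v : V} (p : G.Walk u v) (hp : 2 ≤ p.length) :
    G.dist p.snd p.penultimate ≤ p.length - 2 := by
  have htail : p.tail.penultimate = p.penultimate := by
    simp only [penultimate, getVert_tail, length_tail]
    congr 1
    omega
  calc G.dist p.snd p.penultimate ≤ (p.tail.dropLast.copy rfl htail).length := dist_le _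
    _ = p.length - 2 := by simp only [length_copy, length_dropLast, length_tail]; omega

end Walk

section Translation

variable {φ : G →g G} {x : V} {p : G.Walk x (φ x)}

theorem IsAcyclic.exists_isPath_iterate (hG : G.IsAcyclic) (hφ : Function.Injective φ)
    (hp : p.IsPath) (hfold : p.penultimate ≠ φ p.snd) (k : ℕ) :
    ∃ q : G.Walk x (φ^[k + 1] x), q.IsPath ∧ q.length = (k + 1) * p.length ∧ q.snd = p.snd := by
  induction k with
  | zero => exact ⟨p, hp, by simp, rfl⟩
  | succ k ih =>
    obtain ⟨q, hq, hqlen, hqsnd⟩ := ih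
    refine ⟨(p.append (q.map φ)).copy rfl (Function.iterate_succ_apply' φ _ x).symm, ?_, ?_, ?_⟩
    · rw [Walk.isPath_copy]
      refine hG.isPath_append hp (hq.map hφ) ?_
      rwa [Walk.snd, Walk.getVert_map, ← Walk.snd, hqsnd]
    · rw [Walk.length_copy, Walk.length_append, Walk.length_map, hqlen]
      ring
    · rw [Walk.snd, Walk.getVert_copy, ← Walk.snd,
        Walk.snd_append_of_not_nil (Walk.not_nil_of_penultimate_ne hfold)]

theorem IsAcyclic.iterate_succ_ne_self (hG : G.IsAcyclic) (hφ : Function.Injective φ)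
    (hp : p.IsPath) (hfold : p.penultimate ≠ φ p.snd) (k : ℕ) : φ^[k + 1] x ≠ x := by
  intro hk
  obtain ⟨q, hq, hqlen, -⟩ := hG.exists_isPath_iterate hφ hp hfold k
  have hclosed : (q.copy rfl hk).length = 0 :=
    Walk.length_eq_zero_iff.mpr (Walk.isPath_iff_nil.mp ((Walk.isPath_copy _ _ _).mpr hq))
  have hplen : p.length ≠ 0 := fun h =>
    Walk.not_nil_of_penultimate_ne hfold (Walk.length_eq_zero_iff.mp h)
  rw [Walk.length_copy, hqlen] at hclosed
  exact hplen (by simpa using hclosed)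

end Translation

theorem IsAcyclic.exists_fixed_or_inverted_edge (hG : G.IsAcyclic) (hconn : G.Connected)
    (φ : G ≃g G) {n : ℕ} (hn : 0 < n) (hφn : φ^[n] = id) :
    (∃ v, φ v = v) ∨ ∃ v w, G.Adj v w ∧ φ v = w ∧ φ w = v := by
  have := hconn.nonempty
  obtain ⟨x, hmin⟩ : ∃ x, ∀ y, G.dist x (φ x) ≤ G.dist y (φ y) :=
    ⟨_, fun y => Function.argmin_le (fun v => G.dist v (φ v)) y⟩
  obtain ⟨p, hp, hplen⟩ := hconn.exists_path_of_dist x (φ x)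
  by_cases hfold : p.penultimate = φ p.snd
  · obtain hlen | hlen | hlong : p.length = 0 ∨ p.length = 1 ∨ 2 ≤ p.length := by omega
    · exact Or.inl ⟨x, (Walk.eq_of_length_eq_zero hlen).symm⟩
    · refine Or.inr ⟨x, φ x, p.adj_of_length_eq_one hlen, rfl, ?_⟩
      rw [Walk.penultimate, hlen, Walk.getVert_zero, Walk.snd, ← hlen, Walk.getVert_length]
        at hfold
      exact hfold.symm
    · have hshort := p.dist_snd_penultimate_le hlong
      rw [hfold] at hshort
      have := hmin p.snd
      omega
  · have := hG.iterate_succ_ne_self (φ := φ.toHom) φ.injective hp hfold (n - 1)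
    rw [Nat.sub_add_cancel hn] at this
    exact absurd (congrFun hφn x) this

end SimpleGraph

/-- Tits: an automorphism of finite order of a tree fixes a vertex or an
edge (possibly inverting the edge). -/
theorem stmt_5 {V : Type*} (G : SimpleGraph V) (hconn : G.Connected)
    (hacyclic : G.IsAcyclic) (f : Equiv.Perm V)
    (hf : ∀ v w : V, G.Adj v w ↔ G.Adj (f v) (f w))
    (hord : IsOfFinOrder f) :
    (∃ v : V, f v = v) ∨ (∃ v w : V, G.Adj v w ∧ f v = w ∧ f w = v) := by
  obtain ⟨n, hn, hfn⟩ := hord.exists_pow_eq_one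
  let φ : G ≃g G := ⟨f, (hf _ _).symm⟩
  refine hacyclic.exists_fixed_or_inverted_edge hconn φ hn ?_
  simp [φ, Equiv.Perm.iterate_eq_pow, hfn]
end

section
/- Let L be a nonempty compact totally disconnected topological space. Then the natural map C(L₁, ℤ) ⊗_ℤ C(L₂, ℤ) → C(L₁ × L₂, ℤ), sending f₁ ⊗ f₂ to the function (x₁,x₂) ↦ f₁(x₁)·f₂(x₂), is an isomorphism of abelian groups, where L₁, L₂ are compact totally disconnected spaces and C(−,ℤ) denotes locally constant (equivalently continuous) ℤ-valued functions. -/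
/-!
Surjectivity is Mathlib's uniform approximation of a continuous function on `X × Y`, `X`
profinite, by finite sums `f x * g y`: for a uniformly discrete ring such as `ℤ` the diagonal is
an entourage, so the approximation is exact.

For injectivity, write a tensor as `∑ᵢ fᵢ ⊗ gᵢ`. As `X` is compact and the coefficients are
discrete, `φ x = (fᵢ x)ᵢ` takes finitely many values, so with `e_v` the indicator of the fibre
`φ⁻¹ {v}` every `fᵢ` equals `∑_v vᵢ • e_v` and the tensor equals `∑_v e_v ⊗ ∑ᵢ vᵢ • gᵢ`.
If `v = φ x`, then `∑ᵢ vᵢ • gᵢ` is the slice `y ↦ F (x, y)` of the image `F` of the tensor,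
hence vanishes when `F` does.
-/

open TensorProduct

variable {L₁ L₂ : Type*} [TopologicalSpace L₁] [TopologicalSpace L₂]

/-- The bilinear map `C(L₁,ℤ) × C(L₂,ℤ) → C(L₁ × L₂, ℤ)` sending `(f₁, f₂)` to
`(x₁,x₂) ↦ f₁ x₁ * f₂ x₂`. -/
noncomputable def mulBilin :
    C(L₁, ℤ) →ₗ[ℤ] C(L₂, ℤ) →ₗ[ℤ] C(L₁ × L₂, ℤ) :=
  LinearMap.mk₂ ℤ
    (fun f g => f.comp ⟨Prod.fst, continuous_fst⟩ * g.comp ⟨Prod.snd, continuous_snd⟩)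
    (by intro f f' g; ext p; simp [add_mul])
    (by intro c f g; ext p; simp [mul_assoc])
    (by intro f g g'; ext p; simp [mul_add])
    (by intro c f g; ext p; simp; ring)

namespace ContinuousMap

section FiberIndicator

variable {X V R : Type*} [TopologicalSpace X] [TopologicalSpace V] [DiscreteTopology V]
  [Semiring R] [TopologicalSpace R]

open Classical in
noncomputable def fiberIndicator (φ : C(X, V)) (v : V) : C(X, R) :=
  ⟨fun x => if φ x = v then 1 else 0,
    (continuous_of_discreteTopology (f := fun w : V => if w = v then (1 : R) else 0)).comp
      φ.continuous⟩

open Classical in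
lemma fiberIndicator_apply (φ : C(X, V)) (v : V) (x : X) :
    fiberIndicator (R := R) φ v x = if φ x = v then 1 else 0 := rfl

lemma exists_finset_sum_smul_fiberIndicator [IsTopologicalSemiring R] [CompactSpace X]
    (φ : C(X, V)) : ∃ s : Finset V, ↑s ⊆ Set.range φ ∧
      ∀ (g : V → R) (x : X), (∑ v ∈ s, g v • fiberIndicator φ v) x = g (φ x) := by
  classical
  obtain ⟨s, hs⟩ := (isCompact_range φ.continuous).finite_of_discrete.exists_finset_coe
  refine ⟨s, hs.subset, fun g x => ?_⟩
  have hx : φ x ∈ s := by rw [← Finset.mem_coe, hs]; exact ⟨x, rfl⟩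
  simp only [sum_apply, smul_apply, fiberIndicator_apply, smul_eq_mul, mul_ite, mul_one, mul_zero]
  rw [Finset.sum_ite_eq s (φ x) g, if_pos hx]

end FiberIndicator

section TensorHom

variable {X Y R : Type*} [TopologicalSpace X] [TopologicalSpace Y] [CommRing R]

theorem tensorHom_injective [TopologicalSpace R] [DiscreteTopology R] [CompactSpace X] :
    Function.Injective (tensorHom : C(X, R) ⊗[R] C(Y, R) →ₗ[R] C(X × Y, R)) := by
  classical
  rw [← LinearMap.ker_eq_bot, LinearMap.ker_eq_bot']
  intro t ht
  obtain ⟨S, rfl⟩ := TensorProduct.exists_finset t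
  rw [← Finset.sum_coe_sort S] at ht ⊢
  let φ : C(X, S → R) := .pi fun p => p.1.1
  obtain ⟨s, hsφ, hs⟩ := exists_finset_sum_smul_fiberIndicator (R := R) φ
  have hfst (p : S) : p.1.1 = ∑ v ∈ s, v p • fiberIndicator φ v :=
    ext fun x => (hs (· p) x).symm
  have hslice (x : X) : ∑ p : S, φ x p • p.1.2 = 0 := by
    ext y
    simpa [φ] using congr($ht (x, y))
  calc ∑ p : S, p.1.1 ⊗ₜ[R] p.1.2
      = ∑ p : S, ∑ v ∈ s, fiberIndicator φ v ⊗ₜ[R] (v p • p.1.2) := by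
        refine Finset.sum_congr rfl fun p _ => ?_
        rw [hfst p, sum_tmul]
        simp only [smul_tmul]
    _ = ∑ v ∈ s, fiberIndicator φ v ⊗ₜ[R] ∑ p : S, v p • p.1.2 := by
        rw [Finset.sum_comm]
        simp only [tmul_sum]
    _ = 0 := Finset.sum_eq_zero fun v hv => by
        obtain ⟨x, rfl⟩ := hsφ hv
        rw [hslice x, tmul_zero]

theorem tensorHom_surjective [UniformSpace R] [DiscreteUniformity R] [CompactSpace X]
    [T2Space X] [TotallyDisconnectedSpace X] [CompactSpace Y] :
    Function.Surjective (tensorHom : C(X, R) ⊗[R] C(Y, R) →ₗ[R] C(X × Y, R)) := by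
  intro f
  obtain ⟨n, g, h, hgh⟩ := exists_finite_sum_mul_approximation_of_mem_uniformity f
    (DiscreteUniformity.relId_mem_uniformity R)
  exact ⟨∑ i, g i ⊗ₜ h i, ext fun p => by simpa using (hgh p.1 p.2).symm⟩

end TensorHom

end ContinuousMap

theorem lift_mulBilin :
    TensorProduct.lift (mulBilin (L₁ := L₁) (L₂ := L₂)) = ContinuousMap.tensorHom :=
  rfl

theorem stmt_6_general [CompactSpace L₁] [CompactSpace L₂] [T2Space L₁]
    [TotallyDisconnectedSpace L₁] :
    Function.Bijective
      (TensorProduct.lift (mulBilin (L₁ := L₁) (L₂ := L₂))) := by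
  rw [lift_mulBilin]
  exact ⟨ContinuousMap.tensorHom_injective, ContinuousMap.tensorHom_surjective⟩

/-- for compact totally disconnected (nonempty) spaces L₁, L₂, the natural
map `C(L₁,ℤ) ⊗ C(L₂,ℤ) → C(L₁ × L₂, ℤ)`, `f₁ ⊗ f₂ ↦ ((x₁,x₂) ↦ f₁ x₁ · f₂ x₂)`, is an
isomorphism of abelian groups. -/
theorem stmt_6 [CompactSpace L₁] [CompactSpace L₂] [T2Space L₁] [T2Space L₂]
    [TotallyDisconnectedSpace L₁] [TotallyDisconnectedSpace L₂]
    [Nonempty L₁] [Nonempty L₂] :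
    Function.Bijective
      (TensorProduct.lift (mulBilin (L₁ := L₁) (L₂ := L₂))) :=
  stmt_6_general
end

section
/- Let F be a nonarchimedean local field and Γ ⊆ PGL₂(F) a discrete subgroup. Then the limit set of Γ acting on P¹(ℂ_p) (via a fixed embedding F ↪ ℂ_p) is contained in P¹(F), where ℂ_p is the completion of an algebraic closure of F. -/
open Filter Matrix

noncomputable section

/-- The projective general linear group PGL₂ of a field. -/
abbrev PGL2 (K : Type*) [Field K] := GL (Fin 2) K ⧸ Subgroup.center (GL (Fin 2) K)

variable (C : Type*) [Field C] [TopologicalSpace C] [IsTopologicalRing C]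

instance : TopologicalSpace (Projectivization C (Fin 2 → C)) :=
  instTopologicalSpaceQuotient

/-- The action of GL₂(C) on the projective line P¹(C) (Möbius transformations). -/
def pact (g : GL (Fin 2) C) :
    Projectivization C (Fin 2 → C) → Projectivization C (Fin 2 → C) :=
  Projectivization.map (Matrix.GeneralLinearGroup.toLin g).toLinearEquiv.toLinearMap
    (Matrix.GeneralLinearGroup.toLin g).toLinearEquiv.injective

variable {F : Type*} [Field F] (ι : F →+* C)

/-- The set of F-rational points of P¹(C). -/
def rationalPoints : Set (Projectivization C (Fin 2 → C)) :=
  {x | ∃ (v : Fin 2 → F) (h : (fun i => ι (v i)) ≠ 0),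
    x = Projectivization.mk C (fun i => ι (v i)) h}

end

/-! Rescale each `γ j` so that its largest entry has norm `1`. As `F` is locally compact, a
subsequence of the rescaled matrices converges to a nonzero matrix `A`. If `A` were invertible,
the `γ j` would converge in `PGL₂(F)`, which is impossible for infinitely many distinct elements
of a discrete subgroup; so `A` has rank one, with `F`-rational kernel and image lines. For a
representative `v` of `y`, either `A v ≠ 0` and `x` is the point `[A v]` of the image line of `A`,
or `A v = 0`, `y` is the kernel line of `A`, and `x` is a limit of the `F`-rational points
`γ j • y`; these form a compact, hence closed, subset of `P¹(C)`. -/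

open Topology

namespace Projectivization

variable {K : Type*} [Field K]

theorem mk_eq_mk_iff_mul_eq_mul {u w : Fin 2 → K} (hu : u ≠ 0) (hw : w ≠ 0) :
    mk K u hu = mk K w hw ↔ u 0 * w 1 = u 1 * w 0 := by
  rw [mk_eq_mk_iff']
  constructor
  · rintro ⟨a, rfl⟩
    simp only [Pi.smul_apply, smul_eq_mul]
    ring
  · intro h
    rcases ne_or_eq (w 0) 0 with hw0 | hw0
    · refine ⟨u 0 / w 0, funext (Fin.forall_fin_two.2 ⟨?_, ?_⟩)⟩
      · simp [hw0]
      · simp only [Pi.smul_apply, smul_eq_mul]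
        field_simp
        linear_combination h
    · have hw1 : w 1 ≠ 0 := fun hw1 => hw (funext fun i => by fin_cases i <;> simpa)
      have hu0 : u 0 = 0 := by simpa [hw0, hw1] using h
      refine ⟨u 1 / w 1, funext fun i => ?_⟩
      fin_cases i <;> simp [hw0, hu0, hw1]

variable [TopologicalSpace K] [IsTopologicalRing K]

theorem isOpenQuotientMap_mk :
    IsOpenQuotientMap (Quotient.mk (projectivizationSetoid K (Fin 2 → K))) := by
  refine ⟨Quotient.mk_surjective, continuous_quotient_mk', fun U hU => ?_⟩
  refine isQuotientMap_quotient_mk'.isOpen_preimage.1 ?_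
  have hsat : Quotient.mk (projectivizationSetoid K (Fin 2 → K)) ⁻¹'
      (Quotient.mk (projectivizationSetoid K (Fin 2 → K)) '' U) =
      ⋃ a : Kˣ, (fun u : {v : Fin 2 → K // v ≠ 0} => (⟨a • u.1, (smul_ne_zero_iff_ne a).2 u.2⟩ :
        {v : Fin 2 → K // v ≠ 0})) ⁻¹' U := by
    ext u
    simp only [Set.mem_preimage, Set.mem_image, Set.mem_iUnion]
    constructor
    · rintro ⟨w, hw, hwu⟩
      obtain ⟨a, ha⟩ := (mk_eq_mk_iff K _ _ w.2 u.2).1 hwu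
      exact ⟨a, by simpa [ha] using hw⟩
    · rintro ⟨a, ha⟩
      exact ⟨_, ha, (mk_eq_mk_iff K _ _ _ u.2).2 ⟨a, rfl⟩⟩
  change IsOpen (Quotient.mk _ ⁻¹' _)
  rw [hsat]
  exact isOpen_iUnion fun a => hU.preimage (by fun_prop)

instance [T2Space K] : T2Space (Projectivization K (Fin 2 → K)) := by
  refine (t2Space_iff_of_isOpenQuotientMap isOpenQuotientMap_mk).2 ?_
  have hrel : {q : {v : Fin 2 → K // v ≠ 0} × {v : Fin 2 → K // v ≠ 0} |
      Quotient.mk (projectivizationSetoid K (Fin 2 → K)) q.1 = Quotient.mk _ q.2} =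
      {q | q.1.1 0 * q.2.1 1 = q.1.1 1 * q.2.1 0} := by
    ext q
    exact mk_eq_mk_iff_mul_eq_mul q.1.2 q.2.2
  have hcoord : ∀ i j : Fin 2, Continuous fun q : {v : Fin 2 → K // v ≠ 0} ×
      {v : Fin 2 → K // v ≠ 0} => q.1.1 i * q.2.1 j := fun i j =>
    ((continuous_apply i).comp (continuous_subtype_val.comp continuous_fst)).mul
      ((continuous_apply j).comp (continuous_subtype_val.comp continuous_snd))
  rw [hrel]
  exact isClosed_eq (hcoord 0 1) (hcoord 1 0)

theorem tendsto_mk {α : Type*} {l : Filter α} {f : α → Fin 2 → K} (hf : ∀ a, f a ≠ 0)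
    {v : Fin 2 → K} (hv : v ≠ 0) (h : Tendsto f l (𝓝 v)) :
    Tendsto (fun a => mk K (f a) (hf a)) l (𝓝 (mk K v hv)) :=
  (isOpenQuotientMap_mk.continuous.tendsto ⟨v, hv⟩).comp (tendsto_subtype_rng.2 h)

end Projectivization

theorem Matrix.GeneralLinearGroup.isEmbedding_val {n K : Type*} [Fintype n] [DecidableEq n]
    [Field K] [TopologicalSpace K] [IsTopologicalDivisionRing K] :
    IsEmbedding (Units.val : GL n K → Matrix n n K) := by
  refine Units.isEmbedding_val_mk' (f := Inv.inv) (fun A hA => ?_) fun u => (coe_units_inv u).symm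
  refine (continuousAt_matrix_inv A ?_).continuousWithinAt
  rw [Ring.inverse_eq_inv']
  exact continuousAt_inv₀ ((isUnit_iff_isUnit_det A).1 hA).ne_zero

theorem Subgroup.not_injective_of_tendsto {G : Type*} [Group G] [TopologicalSpace G]
    [IsTopologicalGroup G] {Γ : Subgroup G} [DiscreteTopology Γ] {g : ℕ → G} (hg : ∀ n, g n ∈ Γ)
    {L : G} (hL : Tendsto g atTop (𝓝 L)) : ¬ Function.Injective g := by
  intro hinj
  have hquot : Tendsto (fun n => (⟨(g n)⁻¹ * g (n + 1),
      Γ.mul_mem (Γ.inv_mem (hg n)) (hg (n + 1))⟩ : Γ)) atTop (𝓝 1) := by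
    rw [tendsto_subtype_rng]
    simpa using hL.inv.mul (hL.comp (tendsto_add_atTop_nat 1))
  rw [nhds_discrete] at hquot
  obtain ⟨n, hn⟩ := (tendsto_pure.1 hquot).exists
  exact n.succ_ne_self (hinj (inv_mul_eq_one.1 (Subtype.ext_iff.1 hn)).symm)

section Pact

variable {K : Type*} [Field K]

theorem Matrix.GeneralLinearGroup.mulVec_ne_zero {n : Type*} [Fintype n] [DecidableEq n]
    (g : GL n K) {v : n → K} (hv : v ≠ 0) : (g : Matrix n n K) *ᵥ v ≠ 0 :=
  ((mulVec_injective_of_isUnit g.isUnit).ne_iff' (mulVec_zero _)).2 hv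

theorem pact_mk (g : GL (Fin 2) K) {v : Fin 2 → K} (hv : v ≠ 0) :
    pact K g (Projectivization.mk K v hv) =
      Projectivization.mk K ((g : Matrix (Fin 2) (Fin 2) K) *ᵥ v)
        (GeneralLinearGroup.mulVec_ne_zero g hv) := by
  unfold pact
  rw [Projectivization.map_mk]
  rfl

theorem pact_eq_of_val_eq_smul {g h : GL (Fin 2) K} (a : K)
    (hgh : (h : Matrix (Fin 2) (Fin 2) K) = a • (g : Matrix (Fin 2) (Fin 2) K)) :
    pact K h = pact K g := by
  funext p
  rw [← p.mk_rep, pact_mk, pact_mk, Projectivization.mk_eq_mk_iff']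
  exact ⟨a, by rw [hgh, smul_mulVec]⟩

variable {F : Type*} [Field F]

theorem exists_val_eq_smul_of_mk_eq {g h : GL (Fin 2) F} (hgh : (g : PGL2 F) = h) :
    ∃ c : F, (h : Matrix (Fin 2) (Fin 2) F) = c • (g : Matrix (Fin 2) (Fin 2) F) := by
  have hz := QuotientGroup.eq.1 hgh
  rw [GeneralLinearGroup.center_eq_range_scalar] at hz
  obtain ⟨c, hc⟩ := hz
  refine ⟨c, ?_⟩
  rw [← mul_inv_cancel_left g h, ← hc, Units.val_mul, GeneralLinearGroup.coe_scalar]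
  simp [smul_eq_mul_diagonal]

theorem pact_map_eq_of_mk_eq (ι : F →+* K) {g h : GL (Fin 2) F} (hgh : (g : PGL2 F) = h) :
    pact K (GeneralLinearGroup.map ι h) = pact K (GeneralLinearGroup.map ι g) := by
  obtain ⟨c, hc⟩ := exists_val_eq_smul_of_mk_eq hgh
  refine pact_eq_of_val_eq_smul (ι c) ?_
  ext i j
  simp [GeneralLinearGroup.map_apply, hc]

end Pact

section RationalPoints

variable {F K : Type*} [Field F] [Field K] (ι : F →+* K)

theorem RingHom.map_vec_ne_zero_iff {w : Fin 2 → F} : (fun i => ι (w i)) ≠ 0 ↔ w ≠ 0 := by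
  refine not_congr ⟨fun h => funext fun i => ι.injective (by simpa using congrFun h i), ?_⟩
  rintro rfl
  exact funext fun _ => map_zero ι

theorem mk_mem_rationalPoints_of_mulVec_eq_zero {A : Matrix (Fin 2) (Fin 2) F} (hA : A ≠ 0)
    {v : Fin 2 → K} (hv : v ≠ 0) (hAv : A.map ι *ᵥ v = 0) :
    Projectivization.mk K v hv ∈ rationalPoints K ι := by
  obtain ⟨i, hi⟩ : ∃ i, A i ≠ 0 := by
    by_contra! h
    exact hA (funext h)
  have hw : ![-A i 1, A i 0] ≠ 0 := fun h => hi (funext (Fin.forall_fin_two.2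
    ⟨by simpa using congrFun h 1, by simpa using congrFun h 0⟩))
  refine ⟨_, ι.map_vec_ne_zero_iff.2 hw,
    (Projectivization.mk_eq_mk_iff_mul_eq_mul _ _).2 ?_⟩
  have hrow := congrFun hAv i
  simp only [mulVec, dotProduct, Fin.sum_univ_two, map_apply, Pi.zero_apply] at hrow
  simp only [Matrix.cons_val_zero, Matrix.cons_val_one, map_neg]
  linear_combination hrow

theorem mk_mulVec_mem_rationalPoints_of_det_eq_zero {A : Matrix (Fin 2) (Fin 2) F}
    (hdet : A.det = 0) {v : Fin 2 → K} (hAv : A.map ι *ᵥ v ≠ 0) :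
    Projectivization.mk K (A.map ι *ᵥ v) hAv ∈ rationalPoints K ι := by
  obtain ⟨j, hj⟩ : ∃ j, (fun i => A i j) ≠ 0 := by
    by_contra! h
    obtain rfl : A = 0 := Matrix.ext fun i j => congrFun (h j) i
    simp at hAv
  have hdet' := congrArg ι hdet
  simp only [det_fin_two, map_sub, map_mul, map_zero] at hdet'
  -- the image of `A` is spanned by each of its nonzero columns
  have hcol : ∀ j, (A.map ι *ᵥ v) 0 * ι (A 1 j) = (A.map ι *ᵥ v) 1 * ι (A 0 j) := by
    simp only [Fin.forall_fin_two, mulVec, dotProduct, Fin.sum_univ_two, map_apply]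
    constructor
    · linear_combination (-v 1) * hdet'
    · linear_combination v 0 * hdet'
  exact ⟨_, ι.map_vec_ne_zero_iff.2 hj,
    (Projectivization.mk_eq_mk_iff_mul_eq_mul _ _).2 (hcol j)⟩

theorem pact_map_mem_rationalPoints (g : GL (Fin 2) F) {p : Projectivization K (Fin 2 → K)}
    (hp : p ∈ rationalPoints K ι) : pact K (GeneralLinearGroup.map ι g) p ∈ rationalPoints K ι := by
  obtain ⟨w, hw, rfl⟩ := hp
  have hgw := GeneralLinearGroup.mulVec_ne_zero g (ι.map_vec_ne_zero_iff.1 hw)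
  refine ⟨_, ι.map_vec_ne_zero_iff.2 hgw, ?_⟩
  rw [pact_mk]
  congr 1
  funext i
  exact (RingHom.map_mulVec ι _ w i).symm

end RationalPoints

theorem Pi.exists_norm_apply_eq_norm {ι E : Type*} [Fintype ι] [Nonempty ι]
    [SeminormedAddCommGroup E] (v : ι → E) : ∃ i, ‖v i‖ = ‖v‖ := by
  obtain ⟨i, hi⟩ := Finite.exists_max fun i => ‖v i‖
  exact ⟨i, le_antisymm (norm_le_pi_norm v i) ((pi_norm_le_iff_of_nonneg (norm_nonneg _)).2 hi)⟩

section Normed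

variable {F : Type*} [NormedField F]

theorem exists_norm_smul_eq_one {ι : Type*} [Fintype ι] {v : ι → F} (hv : v ≠ 0) :
    ∃ c : F, ‖c • v‖ = 1 := by
  have : Nonempty ι := not_isEmpty_iff.1 fun _ => hv (Subsingleton.elim _ _)
  obtain ⟨i, hi⟩ := Pi.exists_norm_apply_eq_norm v
  exact ⟨(v i)⁻¹, by rw [norm_smul, norm_inv, hi, inv_mul_cancel₀ (norm_ne_zero_iff.2 hv)]⟩

theorem isClosed_rationalPoints [ProperSpace F] {K : Type*} [Field K] [TopologicalSpace K]
    [IsTopologicalRing K] [T2Space K] (ι : F →+* K) (hι : Continuous ι) :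
    IsClosed (rationalPoints K ι) := by
  have hrange : rationalPoints K ι = Set.range fun w : Metric.sphere (0 : Fin 2 → F) 1 =>
      Projectivization.mk K (fun i => ι (w.1 i))
        (ι.map_vec_ne_zero_iff.2 (ne_zero_of_mem_sphere one_ne_zero w)) := by
    ext p
    constructor
    · rintro ⟨v, hv, rfl⟩
      obtain ⟨c, hc⟩ := exists_norm_smul_eq_one (ι.map_vec_ne_zero_iff.1 hv)
      refine ⟨⟨c • v, mem_sphere_zero_iff_norm.2 hc⟩,
        (Projectivization.mk_eq_mk_iff' _ _ _ _ _).2 ⟨ι c, funext fun i => ?_⟩⟩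
      simp
    · rintro ⟨w, rfl⟩
      exact ⟨w.1, _, rfl⟩
  have : CompactSpace (Metric.sphere (0 : Fin 2 → F) 1) :=
    isCompact_iff_compactSpace.1 (isCompact_sphere 0 1)
  rw [hrange]
  refine (isCompact_range ?_).isClosed
  have hw : Continuous fun w : Metric.sphere (0 : Fin 2 → F) 1 => fun i => ι (w.1 i) :=
    continuous_pi fun i => hι.comp ((continuous_apply i).comp continuous_subtype_val)
  exact Projectivization.isOpenQuotientMap_mk.continuous.comp (hw.subtype_mk _)

end Normed

theorem det_eq_zero_of_tendsto {F : Type*} [Field F] [TopologicalSpace F]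
    [IsTopologicalDivisionRing F] {Γ : Subgroup (PGL2 F)} [DiscreteTopology Γ]
    {g : ℕ → GL (Fin 2) F} (hg : ∀ n, (g n : PGL2 F) ∈ Γ)
    (hinj : Function.Injective fun n => (g n : PGL2 F)) {A : Matrix (Fin 2) (Fin 2) F}
    (hA : Tendsto (fun n => (g n : Matrix (Fin 2) (Fin 2) F)) atTop (𝓝 A)) : A.det = 0 := by
  by_contra hdet
  lift A to GL (Fin 2) F using (isUnit_iff_isUnit_det A).2 (isUnit_iff_ne_zero.2 hdet)
  have hgA : Tendsto g atTop (𝓝 A) := GeneralLinearGroup.isEmbedding_val.tendsto_nhds_iff.2 hA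
  exact Subgroup.not_injective_of_tendsto hg ((continuous_quotient_mk'.tendsto _).comp hgA) hinj

section MatrixNorm

attribute [local instance] Matrix.normedAddCommGroup Matrix.normedSpace

variable {F : Type*} [NormedField F]

theorem exists_mk_eq_norm_eq_one (γ : GL (Fin 2) F) :
    ∃ g : GL (Fin 2) F, (g : PGL2 F) = γ ∧ ‖(g : Matrix (Fin 2) (Fin 2) F)‖ = 1 := by
  set M := (γ : Matrix (Fin 2) (Fin 2) F)
  obtain ⟨p, hp⟩ := Pi.exists_norm_apply_eq_norm M
  obtain ⟨q, hq⟩ := Pi.exists_norm_apply_eq_norm (M p)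
  have hM : ‖M‖ ≠ 0 := norm_ne_zero_iff.2 γ.ne_zero
  have hc : (M p q)⁻¹ ≠ 0 := inv_ne_zero (norm_ne_zero_iff.1 (by rwa [hq, hp]))
  set z := GeneralLinearGroup.scalar (Fin 2) (Units.mk0 _ hc)
  refine ⟨z * γ, ?_, ?_⟩
  · rw [QuotientGroup.mk_mul, (QuotientGroup.eq_one_iff z).2, one_mul]
    rw [GeneralLinearGroup.center_eq_range_scalar]
    exact ⟨_, rfl⟩
  · have hzγ : ((z * γ : GL (Fin 2) F) : Matrix (Fin 2) (Fin 2) F) = (M p q)⁻¹ • M := by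
      simp [z, GeneralLinearGroup.coe_scalar, smul_eq_diagonal_mul, M]
    rw [hzγ, norm_smul, norm_inv, hq, hp]
    exact inv_mul_cancel₀ hM

theorem exists_subseq_lift_tendsto [ProperSpace F] (γ : ℕ → GL (Fin 2) F) :
    ∃ (φ : ℕ → ℕ) (g : ℕ → GL (Fin 2) F) (A : Matrix (Fin 2) (Fin 2) F), StrictMono φ ∧
      (∀ n, (g n : PGL2 F) = γ (φ n)) ∧ A ≠ 0 ∧
      Tendsto (fun n => (g n : Matrix (Fin 2) (Fin 2) F)) atTop (𝓝 A) := by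
  choose g hgγ hg using fun n => exists_mk_eq_norm_eq_one (γ n)
  have : ProperSpace (Matrix (Fin 2) (Fin 2) F) :=
    inferInstanceAs (ProperSpace (Fin 2 → Fin 2 → F))
  obtain ⟨A, hA, φ, hφ, hlim⟩ :=
    (isCompact_sphere (0 : Matrix (Fin 2) (Fin 2) F) 1).tendsto_subseq
      (x := fun n => (g n : Matrix (Fin 2) (Fin 2) F)) (fun n => mem_sphere_zero_iff_norm.2 (hg n))
  exact ⟨φ, g ∘ φ, A, hφ, fun n => hgγ (φ n), ne_zero_of_mem_sphere one_ne_zero ⟨A, hA⟩, hlim⟩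

end MatrixNorm

theorem mem_rationalPoints_of_tendsto_pact {F K : Type*} [NormedField F]
    [ProperSpace F] [Field K] [TopologicalSpace K] [IsTopologicalRing K] [T2Space K]
    (ι : F →+* K) (hι : Continuous ι) {g : ℕ → GL (Fin 2) F} {A : Matrix (Fin 2) (Fin 2) F}
    (hA : A ≠ 0) (hdet : A.det = 0)
    (hgA : Tendsto (fun n => (g n : Matrix (Fin 2) (Fin 2) F)) atTop (𝓝 A))
    {y x : Projectivization K (Fin 2 → K)}
    (hx : Tendsto (fun n => pact K (GeneralLinearGroup.map ι (g n)) y) atTop (𝓝 x)) :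
    x ∈ rationalPoints K ι := by
  rw [← y.mk_rep] at hx
  by_cases hAy : A.map ι *ᵥ y.rep = 0
  · have hy := mk_mem_rationalPoints_of_mulVec_eq_zero ι hA y.rep_nonzero hAy
    exact (isClosed_rationalPoints ι hι).mem_of_tendsto hx
      (Eventually.of_forall fun n => pact_map_mem_rationalPoints ι (g n) hy)
  · have hlim : Tendsto (fun n => (g n : Matrix (Fin 2) (Fin 2) F).map ι *ᵥ y.rep) atTop
        (𝓝 (A.map ι *ᵥ y.rep)) :=
      ((((continuous_id.matrix_map hι).matrix_mulVec continuous_const).tendsto A).comp hgA)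
    simp only [pact_mk] at hx
    rw [tendsto_nhds_unique hx (Projectivization.tendsto_mk _ hAy hlim)]
    exact mk_mulVec_mem_rationalPoints_of_det_eq_zero ι hdet hAy

theorem stmt_9_general {F C : Type*} [NontriviallyNormedField F] [LocallyCompactSpace F]
    [NontriviallyNormedField C]
    (ι : F →+* C) (hι : Isometry ι)
    (Γ : Subgroup (PGL2 F)) (hΓ : DiscreteTopology Γ)
    (x : Projectivization C (Fin 2 → C))
    (hx : ∃ (y : Projectivization C (Fin 2 → C)) (γ : ℕ → GL (Fin 2) F),
      (∀ j, (QuotientGroup.mk (γ j) : PGL2 F) ∈ Γ) ∧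
      (∀ i j, i ≠ j →
        (QuotientGroup.mk (γ i) : PGL2 F) ≠ (QuotientGroup.mk (γ j) : PGL2 F)) ∧
      Tendsto (fun j => pact C (Matrix.GeneralLinearGroup.map ι (γ j)) y)
        atTop (nhds x)) :
    x ∈ rationalPoints C ι := by
  have : ProperSpace F := .of_locallyCompactSpace F
  obtain ⟨y, γ, hγΓ, hγinj, hγx⟩ := hx
  obtain ⟨φ, g, A, hφ, hgγ, hA, hgA⟩ := exists_subseq_lift_tendsto γ
  have hgΓ : ∀ n, (g n : PGL2 F) ∈ Γ := fun n => hgγ n ▸ hγΓ (φ n)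
  have hginj : Function.Injective fun n => (g n : PGL2 F) := by
    intro m n hmn
    by_contra hne
    exact hγinj _ _ (hφ.injective.ne hne) (by simpa only [hgγ] using hmn)
  have hdet : A.det = 0 := det_eq_zero_of_tendsto hgΓ hginj hgA
  refine mem_rationalPoints_of_tendsto_pact ι hι.continuous hA hdet hgA (y := y) ?_
  exact (hγx.comp hφ.tendsto_atTop).congr fun n => congrFun (pact_map_eq_of_mk_eq ι (hgγ n)) y

/-- the limit set in P¹(C) of a discrete subgroup of PGL₂(F), for F a
nonarchimedean local field embedded in the completion C of an algebraic closure,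
is contained in P¹(F). -/
theorem stmt_9 {F C : Type*} [NontriviallyNormedField F] [CompleteSpace F]
    [LocallyCompactSpace F] [IsUltrametricDist F]
    [NontriviallyNormedField C] [CompleteSpace C] [IsAlgClosed C] [IsUltrametricDist C]
    (ι : F →+* C) (hι : Isometry ι)
    (Γ : Subgroup (PGL2 F)) (hΓ : DiscreteTopology Γ)
    (x : Projectivization C (Fin 2 → C))
    (hx : ∃ (y : Projectivization C (Fin 2 → C)) (γ : ℕ → GL (Fin 2) F),
      (∀ j, (QuotientGroup.mk (γ j) : PGL2 F) ∈ Γ) ∧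
      (∀ i j, i ≠ j →
        (QuotientGroup.mk (γ i) : PGL2 F) ≠ (QuotientGroup.mk (γ j) : PGL2 F)) ∧
      Tendsto (fun j => pact C (Matrix.GeneralLinearGroup.map ι (γ j)) y)
        atTop (nhds x)) :
    x ∈ rationalPoints C ι :=
  stmt_9_general ι hι Γ hΓ x hx
end

section
/- Let L₁ and L₂ be profinite spaces and St_i := C(L_i, ℤ)/ℤ the quotient by constant functions. The kernel of the natural surjection C(L₁×L₂, ℤ) → St₁ ⊗_ℤ St₂ (induced by C(L₁,ℤ)⊗C(L₂,ℤ) ≅ C(L₁×L₂,ℤ)) is generated by functions that are constant in at least one of the two variables. -/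
open TensorProduct

set_option synthInstance.maxHeartbeats 1000000
set_option maxHeartbeats 1000000

variable {L₁ L₂ : Type*} [TopologicalSpace L₁] [TopologicalSpace L₂]

/-- The constant functions, as a submodule of `C(L,ℤ)`. -/
noncomputable def constants (L : Type*) [TopologicalSpace L] : Submodule ℤ C(L, ℤ) :=
  Submodule.span ℤ {(1 : C(L, ℤ))}

lemma one_mem_constants (L : Type*) [TopologicalSpace L] : (1 : C(L, ℤ)) ∈ constants L :=
  Submodule.mem_span_singleton_self _

lemma mulBilin_apply (f : C(L₁, ℤ)) (g : C(L₂, ℤ)) (x : L₁ × L₂) :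
    mulBilin f g x = f x.1 * g x.2 := rfl

/-- the kernel of the natural surjection
`C(L₁ × L₂, ℤ) → St₁ ⊗ St₂` (where `Stᵢ = C(Lᵢ,ℤ)/ℤ`), i.e. the image under the
canonical isomorphism `C(L₁,ℤ) ⊗ C(L₂,ℤ) ≅ C(L₁×L₂,ℤ)` of the kernel of
`q₁ ⊗ q₂ : C(L₁,ℤ) ⊗ C(L₂,ℤ) → St₁ ⊗ St₂`, is generated by the functions which are
constant in at least one of the two variables. -/
theorem stmt_14 [CompactSpace L₁] [CompactSpace L₂] [T2Space L₁] [T2Space L₂]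
    [TotallyDisconnectedSpace L₁] [TotallyDisconnectedSpace L₂]
    [Nonempty L₁] [Nonempty L₂] :
    Submodule.map (TensorProduct.lift (mulBilin (L₁ := L₁) (L₂ := L₂)))
      (LinearMap.ker (TensorProduct.map (constants L₁).mkQ (constants L₂).mkQ))
    = Submodule.span ℤ {f : C(L₁ × L₂, ℤ) |
        (∃ g : C(L₂, ℤ), ∀ x : L₁ × L₂, f x = g x.2) ∨
        (∃ g : C(L₁, ℤ), ∀ x : L₁ × L₂, f x = g x.1)} := by
  apply le_antisymm
  · -- compute the kernel via right exactness
    rw [TensorProduct.map_ker (LinearMap.exact_subtype_mkQ (constants L₁))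
        (Submodule.mkQ_surjective _) (LinearMap.exact_subtype_mkQ (constants L₂))
        (Submodule.mkQ_surjective _)]
    rw [Submodule.map_sup]
    apply sup_le
    · -- image of C(L₁) ⊗ constants L₂
      rintro _ ⟨_, ⟨t, rfl⟩, rfl⟩
      induction t using TensorProduct.induction_on with
      | zero =>
        rw [map_zero, map_zero]
        exact Submodule.zero_mem _
      | tmul f c =>
        obtain ⟨n, hn⟩ := Submodule.mem_span_singleton.mp c.2
        apply Submodule.subset_span
        right
        refine ⟨n • f, fun x => ?_⟩
        have : (c : C(L₂, ℤ)) = n • 1 := hn.symm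
        simp [mulBilin_apply, this, mul_comm]
      | add a b ha hb =>
        rw [map_add, map_add]
        exact Submodule.add_mem _ ha hb
    · -- image of constants L₁ ⊗ C(L₂)
      rintro _ ⟨_, ⟨t, rfl⟩, rfl⟩
      induction t using TensorProduct.induction_on with
      | zero =>
        rw [map_zero, map_zero]
        exact Submodule.zero_mem _
      | tmul c g =>
        obtain ⟨n, hn⟩ := Submodule.mem_span_singleton.mp c.2
        apply Submodule.subset_span
        left
        refine ⟨n • g, fun x => ?_⟩
        have : (c : C(L₁, ℤ)) = n • 1 := hn.symm
        simp [mulBilin_apply, this]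
      | add a b ha hb =>
        rw [map_add, map_add]
        exact Submodule.add_mem _ ha hb
  · rw [Submodule.span_le]
    rintro f (⟨g, hg⟩ | ⟨g, hg⟩)
    · refine ⟨(1 : C(L₁, ℤ)) ⊗ₜ g, ?_, ?_⟩
      · rw [SetLike.mem_coe, LinearMap.mem_ker, TensorProduct.map_tmul, Submodule.mkQ_apply,
          (Submodule.Quotient.mk_eq_zero _).mpr (one_mem_constants L₁)]
        exact TensorProduct.zero_tmul _ _
      · ext x
        simpa [mulBilin_apply] using (hg x).symm
    · refine ⟨g ⊗ₜ (1 : C(L₂, ℤ)), ?_, ?_⟩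
      · rw [SetLike.mem_coe, LinearMap.mem_ker, TensorProduct.map_tmul]
        rw [show (constants L₂).mkQ 1 = 0 from (Submodule.Quotient.mk_eq_zero _).mpr (one_mem_constants L₂)]
        exact TensorProduct.tmul_zero _ _
      · ext x
        simpa [mulBilin_apply] using (hg x).symm
end

section
/- Let L be a profinite space. Then the abelian group C(L, ℤ) of continuous ℤ-valued functions is a free ℤ-module, and the quotient C(L, ℤ)/ℤ by the constant functions is also a free ℤ-module. -/
/-!
By Nöbeling's theorem, `LocallyConstant S ℤ` has a basis of "good products" for every profinite
`S`, and when `S` is nonempty the empty product, i.e. the constant function `1`, is one of them.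
Dividing a free module by the span of a single basis vector leaves a free module, with basis the
remaining basis vectors, since their span is a complement of that line.
-/

universe u

open Module

theorem Module.Basis.free_quotient_span_singleton {ι R M : Type*} [Ring R] [AddCommGroup M]
    [Module R M] (b : Basis ι R M) (i : ι) :
    Module.Free R (M ⧸ Submodule.span R {b i}) := by
  have hcompl := b.linearIndependent.isCompl_span_image b.span_eq (isCompl_compl (x := {i}))
  rw [Set.image_singleton, Set.image_eq_range] at hcompl
  exact .of_basis <| (Basis.span (b.linearIndependent.comp
    (Subtype.val : ({i}ᶜ : Set ι) → ι) Subtype.val_injective)).map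
    (Submodule.quotientEquivOfIsCompl _ _ hcompl).symm

def ContinuousMap.linearEquivLocallyConstant (X : Type*) [TopologicalSpace X] :
    C(X, ℤ) ≃ₗ[ℤ] LocallyConstant X ℤ where
  toFun f := ⟨f, (IsLocallyConstant.iff_continuous f).mpr f.continuous⟩
  invFun g := g
  left_inv _ := rfl
  right_inv _ := rfl
  map_add' _ _ := rfl
  map_smul' _ _ := rfl

namespace Profinite.NobelingProof

theorem Products.isGood_nil_of_nonempty {I : Type*} [LinearOrder I] {C : Set (I → Bool)}
    (hC : C.Nonempty) : Products.isGood C Products.nil := by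
  intro h
  rw [Products.lt_nil_empty, Set.image_empty, Submodule.span_empty, Submodule.mem_bot] at h
  obtain ⟨x, hx⟩ := hC
  simpa [Products.eval, Products.nil] using DFunLike.congr_fun h ⟨x, hx⟩

theorem GoodProducts.basis_nil {I : Type*} [LinearOrder I] [WellFoundedLT I]
    {C : Set (I → Bool)} (hC : IsClosed C) (hnil : Products.isGood C Products.nil) :
    GoodProducts.Basis C hC ⟨Products.nil, hnil⟩ = 1 := by
  refine (Basis.mk_apply _ _ _).trans ?_
  ext
  simp [GoodProducts.eval, Products.eval, Products.nil]

end Profinite.NobelingProof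

open Profinite NobelingProof in
theorem LocallyConstant.exists_basis_eq_one (S : Profinite.{u}) [Nonempty S] :
    ∃ (ι : Type u) (b : Basis ι ℤ (LocallyConstant S ℤ)) (i : ι), b i = 1 := by
  obtain ⟨_, _⟩ := exists_wellFoundedLT {C : Set S // IsClopen C}
  have hι := Nobeling.isClosedEmbedding S
  have hnil := Products.isGood_nil_of_nonempty (Set.range_nonempty (Nobeling.ι S))
  refine ⟨_, (GoodProducts.Basis _ hι.isClosed_range).map
    (LocallyConstant.congrLeftₗ ℤ hι.isEmbedding.toHomeomorph).symm, ⟨_, hnil⟩, ?_⟩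
  rw [Basis.map_apply, GoodProducts.basis_nil]
  rfl

/-- for a profinite space L, the abelian group C(L,ℤ) of continuous
(= locally constant) ℤ-valued functions is a free ℤ-module, and its quotient by the
subgroup of constant functions is also a free ℤ-module. -/
theorem stmt_15 {L : Type*} [TopologicalSpace L] [CompactSpace L] [T2Space L]
    [TotallyDisconnectedSpace L] :
    Module.Free ℤ C(L, ℤ) ∧
    Module.Free ℤ (C(L, ℤ) ⧸ Submodule.span ℤ {(1 : C(L, ℤ))}) := by
  rcases isEmpty_or_nonempty L with hL | hL
  · exact ⟨.of_subsingleton _ _, .of_subsingleton _ _⟩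
  · obtain ⟨ι, b, i, hb⟩ := LocallyConstant.exists_basis_eq_one (Profinite.of L)
    let b' := b.map (ContinuousMap.linearEquivLocallyConstant L).symm
    have hb' : b' i = 1 := by
      rw [Basis.map_apply, hb]
      rfl
    exact ⟨.of_basis b', hb' ▸ b'.free_quotient_span_singleton i⟩
end

section
/- Let M₁ and M₂ be second-countable prodiscrete abelian topological groups and Λ₁ ⊆ M₁, Λ₂ ⊆ M₂ closed subgroups. Equip M₁ ⊗_ℤ M₂ with the topology generated by subgroups U₁ ⊗ M₂ + M₁ ⊗ U₂ for open subgroups U_i ⊆ M_i, and let M₁ ⊗̂ M₂ denote the completion. Then the closure of the image of Λ₁ ⊗ M₂ + M₁ ⊗ Λ₂ in M₁ ⊗̂ M₂ satisfies: the quotient (M₁ ⊗̂ M₂)/closure is canonically isomorphic to (M₁/Λ₁) ⊗̂ (M₂/Λ₂). -/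
/-!
Let `π = q₁ ⊗ q₂ : M₁ ⊗ M₂ → (M₁/Λ₁) ⊗ (M₂/Λ₂)`. By right exactness of `⊗`, `π` is surjective
with kernel `Λ₁ ⊗ M₂ + M₁ ⊗ Λ₂`; since it maps `U₁ ⊗ M₂ + M₁ ⊗ U₂` onto
`q₁U₁ ⊗ (M₂/Λ₂) + (M₁/Λ₁) ⊗ q₂U₂` and the `qᵢ` are open, it is a continuous open map.

For a quotient map `π : G → H` of abelian uniform groups, the completion `π̂ : Ĝ → Ĥ` kills the
closure `N` of the image of `ker π`, and the induced map `Ĝ/N → Ĥ` is inverted by the extension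
of `H ≅ G/ker π → Ĝ/N` to `Ĥ`. That extension exists because `Ĝ/N` is complete, which needs `G`,
hence `Ĝ`, to be first countable; for `M₁ ⊗ M₂` this comes from countable bases of open
subgroups of `M₁` and `M₂`.
-/

open scoped TensorProduct
open UniformSpace

/-- The subgroup `A ⊗ M₂ + M₁ ⊗ B` of `M₁ ⊗ M₂` determined by subgroups `A ⊆ M₁`,
`B ⊆ M₂`. -/
noncomputable def mixedSubgroup {M₁ M₂ : Type} [AddCommGroup M₁] [AddCommGroup M₂]
    (A : AddSubgroup M₁) (B : AddSubgroup M₂) : AddSubgroup (M₁ ⊗[ℤ] M₂) :=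
  AddSubgroup.closure
    ({x | ∃ a ∈ A, ∃ m : M₂, x = a ⊗ₜ[ℤ] m} ∪ {x | ∃ m : M₁, ∃ b ∈ B, x = m ⊗ₜ[ℤ] b})

open Topology

section MixedSubgroup

variable {M₁ M₂ N₁ N₂ : Type} [AddCommGroup M₁] [AddCommGroup M₂]
  [AddCommGroup N₁] [AddCommGroup N₂]

noncomputable abbrev AddMonoidHom.tensorMap (f : M₁ →+ N₁) (g : M₂ →+ N₂) :
    M₁ ⊗[ℤ] M₂ →+ N₁ ⊗[ℤ] N₂ :=
  (TensorProduct.map f.toIntLinearMap g.toIntLinearMap).toAddMonoidHom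

@[simp]
lemma AddMonoidHom.tensorMap_tmul (f : M₁ →+ N₁) (g : M₂ →+ N₂) (m₁ : M₁) (m₂ : M₂) :
    f.tensorMap g (m₁ ⊗ₜ m₂) = f m₁ ⊗ₜ g m₂ :=
  rfl

lemma mixedSubgroup_le_iff {A : AddSubgroup M₁} {B : AddSubgroup M₂}
    {S : AddSubgroup (M₁ ⊗[ℤ] M₂)} :
    mixedSubgroup A B ≤ S ↔ (∀ a ∈ A, ∀ m, a ⊗ₜ m ∈ S) ∧ ∀ m, ∀ b ∈ B, m ⊗ₜ b ∈ S := by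
  simp only [mixedSubgroup, AddSubgroup.closure_le, Set.union_subset_iff, Set.ofPred_subset,
    SetLike.mem_coe]
  constructor
  · rintro ⟨hA, hB⟩
    exact ⟨fun a ha m => hA _ ⟨a, ha, m, rfl⟩, fun m b hb => hB _ ⟨m, b, hb, rfl⟩⟩
  · rintro ⟨hA, hB⟩
    exact ⟨fun _ ⟨a, ha, m, hx⟩ => hx ▸ hA a ha m, fun _ ⟨m, b, hb, hx⟩ => hx ▸ hB m b hb⟩

lemma tmul_mem_mixedSubgroup_left {A : AddSubgroup M₁} (B : AddSubgroup M₂) {a : M₁}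
    (ha : a ∈ A) (m : M₂) : a ⊗ₜ[ℤ] m ∈ mixedSubgroup A B :=
  (mixedSubgroup_le_iff.1 le_rfl).1 a ha m

lemma tmul_mem_mixedSubgroup_right (A : AddSubgroup M₁) {B : AddSubgroup M₂} (m : M₁) {b : M₂}
    (hb : b ∈ B) : m ⊗ₜ[ℤ] b ∈ mixedSubgroup A B :=
  (mixedSubgroup_le_iff.1 le_rfl).2 m b hb

lemma mixedSubgroup_mono {A A' : AddSubgroup M₁} {B B' : AddSubgroup M₂}
    (hA : A ≤ A') (hB : B ≤ B') : mixedSubgroup A B ≤ mixedSubgroup A' B' :=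
  mixedSubgroup_le_iff.2
    ⟨fun _ ha m => tmul_mem_mixedSubgroup_left _ (hA ha) m,
      fun m _ hb => tmul_mem_mixedSubgroup_right _ m (hB hb)⟩

lemma mixedSubgroup_comap_le_comap (f : M₁ →+ N₁) (g : M₂ →+ N₂) (U₁ : AddSubgroup N₁)
    (U₂ : AddSubgroup N₂) :
    mixedSubgroup (U₁.comap f) (U₂.comap g) ≤ (mixedSubgroup U₁ U₂).comap (f.tensorMap g) :=
  mixedSubgroup_le_iff.2
    ⟨fun _ ha m => tmul_mem_mixedSubgroup_left U₂ (AddSubgroup.mem_comap.1 ha) (g m),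
      fun m _ hb => tmul_mem_mixedSubgroup_right U₁ (f m) (AddSubgroup.mem_comap.1 hb)⟩

lemma mixedSubgroup_map_le_map {f : M₁ →+ N₁} {g : M₂ →+ N₂} (hf : Function.Surjective f)
    (hg : Function.Surjective g) (A : AddSubgroup M₁) (B : AddSubgroup M₂) :
    mixedSubgroup (A.map f) (B.map g) ≤ (mixedSubgroup A B).map (f.tensorMap g) := by
  refine mixedSubgroup_le_iff.2 ⟨?_, ?_⟩
  · rintro _ ⟨a, ha, rfl⟩ n
    obtain ⟨m, rfl⟩ := hg n
    exact ⟨a ⊗ₜ m, tmul_mem_mixedSubgroup_left B ha m, rfl⟩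
  · rintro n _ ⟨b, hb, rfl⟩
    obtain ⟨m, rfl⟩ := hf n
    exact ⟨m ⊗ₜ b, tmul_mem_mixedSubgroup_right A m hb, rfl⟩

lemma AddSubgroup.exact_subtype_mk' {M : Type} [AddCommGroup M] (Λ : AddSubgroup M) :
    Function.Exact Λ.toIntSubmodule.subtype (QuotientAddGroup.mk' Λ).toIntLinearMap :=
  fun y => by simp

lemma ker_tensorMap_mk' (Λ₁ : AddSubgroup M₁) (Λ₂ : AddSubgroup M₂) :
    ((QuotientAddGroup.mk' Λ₁).tensorMap (QuotientAddGroup.mk' Λ₂)).ker =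
      mixedSubgroup Λ₁ Λ₂ := by
  refine le_antisymm ?_ (mixedSubgroup_le_iff.2
    ⟨fun a ha m => by simp [(QuotientAddGroup.eq_zero_iff a).2 ha],
      fun m b hb => by simp [(QuotientAddGroup.eq_zero_iff b).2 hb]⟩)
  have hker := TensorProduct.map_ker Λ₁.exact_subtype_mk' (QuotientAddGroup.mk'_surjective Λ₁)
    Λ₂.exact_subtype_mk' (QuotientAddGroup.mk'_surjective Λ₂)
  intro x hx
  replace hx : x ∈ LinearMap.ker _ := hx
  rw [hker] at hx
  obtain ⟨_, ⟨s, rfl⟩, _, ⟨t, rfl⟩, rfl⟩ := Submodule.mem_sup.1 hx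
  clear hx
  refine add_mem ?_ ?_
  · induction s using TensorProduct.induction_on with
    | zero => simp
    | tmul m b => exact tmul_mem_mixedSubgroup_right Λ₁ m b.2
    | add s₁ s₂ h₁ h₂ => rw [map_add]; exact add_mem h₁ h₂
  · induction t using TensorProduct.induction_on with
    | zero => simp
    | tmul a m => exact tmul_mem_mixedSubgroup_left Λ₂ a.2 m
    | add t₁ t₂ h₁ h₂ => rw [map_add]; exact add_mem h₁ h₂

end MixedSubgroup

section MixedTopology

variable {M₁ M₂ N₁ N₂ : Type} [AddCommGroup M₁] [TopologicalSpace M₁]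
  [AddCommGroup M₂] [TopologicalSpace M₂] [AddCommGroup N₁] [TopologicalSpace N₁]
  [AddCommGroup N₂] [TopologicalSpace N₂]

variable (M₁ M₂) in
def HasMixedNhdsBasis [TopologicalSpace (M₁ ⊗[ℤ] M₂)] : Prop :=
  (𝓝 (0 : M₁ ⊗[ℤ] M₂)).HasBasis
    (fun U : AddSubgroup M₁ × AddSubgroup M₂ => IsOpen (U.1 : Set M₁) ∧ IsOpen (U.2 : Set M₂))
    fun U => mixedSubgroup U.1 U.2

lemma HasMixedNhdsBasis.of_mem_nhds_iff [TopologicalSpace (M₁ ⊗[ℤ] M₂)]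
    (h : ∀ s : Set (M₁ ⊗[ℤ] M₂), s ∈ 𝓝 0 ↔ ∃ (U₁ : AddSubgroup M₁) (U₂ : AddSubgroup M₂),
      IsOpen (U₁ : Set M₁) ∧ IsOpen (U₂ : Set M₂) ∧ (mixedSubgroup U₁ U₂ : Set _) ⊆ s) :
    HasMixedNhdsBasis M₁ M₂ :=
  ⟨fun s => by simp [h s, and_assoc]⟩

variable [TopologicalSpace (M₁ ⊗[ℤ] M₂)] [IsTopologicalAddGroup (M₁ ⊗[ℤ] M₂)]
  [TopologicalSpace (N₁ ⊗[ℤ] N₂)] [IsTopologicalAddGroup (N₁ ⊗[ℤ] N₂)]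

lemma HasMixedNhdsBasis.continuous_tensorMap (hM : HasMixedNhdsBasis M₁ M₂)
    (hN : HasMixedNhdsBasis N₁ N₂) {f : M₁ →+ N₁} {g : M₂ →+ N₂} (hf : Continuous f)
    (hg : Continuous g) : Continuous (f.tensorMap g) := by
  refine continuous_of_continuousAt_zero _ ?_
  rw [ContinuousAt, map_zero]
  exact (hM.tendsto_iff hN).2 fun U hU =>
    ⟨(U.1.comap f, U.2.comap g), ⟨hU.1.preimage hf, hU.2.preimage hg⟩,
      fun _ hx => mixedSubgroup_comap_le_comap f g U.1 U.2 hx⟩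

lemma HasMixedNhdsBasis.isOpenMap_tensorMap (hM : HasMixedNhdsBasis M₁ M₂)
    (hN : HasMixedNhdsBasis N₁ N₂) {f : M₁ →+ N₁} {g : M₂ →+ N₂}
    (hf : Function.Surjective f) (hg : Function.Surjective g) (hfo : IsOpenMap f)
    (hgo : IsOpenMap g) : IsOpenMap (f.tensorMap g) := by
  refine IsTopologicalAddGroup.isOpenMap_iff_nhds_zero.2 ((hM.map _).ge_iff.2 fun U hU => ?_)
  refine hN.mem_iff.2 ⟨(U.1.map f, U.2.map g), ⟨hfo _ hU.1, hgo _ hU.2⟩, ?_⟩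
  exact mixedSubgroup_map_le_map hf hg U.1 U.2

end MixedTopology

lemma NonarchimedeanAddGroup.exists_openAddSubgroup_basis (M : Type*) [AddCommGroup M]
    [TopologicalSpace M] [FirstCountableTopology M] [NonarchimedeanAddGroup M] :
    ∃ V : ℕ → OpenAddSubgroup M, (𝓝 (0 : M)).HasBasis (fun _ => True) fun n => V n := by
  obtain ⟨s, hs⟩ := (𝓝 (0 : M)).exists_antitone_basis
  choose V hV using fun n => NonarchimedeanAddGroup.is_nonarchimedean (s n) (hs.mem n)
  refine ⟨V, hs.toHasBasis.to_hasBasis (fun n _ => ⟨n, trivial, hV n⟩) fun n _ => ?_⟩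
  exact hs.toHasBasis.mem_iff.1 ((V n).isOpen.mem_nhds (V n).zero_mem)

lemma HasMixedNhdsBasis.isCountablyGenerated {M₁ M₂ : Type} [AddCommGroup M₁]
    [TopologicalSpace M₁] [FirstCountableTopology M₁] [NonarchimedeanAddGroup M₁]
    [AddCommGroup M₂] [TopologicalSpace M₂] [FirstCountableTopology M₂]
    [NonarchimedeanAddGroup M₂] [TopologicalSpace (M₁ ⊗[ℤ] M₂)]
    (hM : HasMixedNhdsBasis M₁ M₂) : (𝓝 (0 : M₁ ⊗[ℤ] M₂)).IsCountablyGenerated := by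
  obtain ⟨V, hV⟩ := NonarchimedeanAddGroup.exists_openAddSubgroup_basis M₁
  obtain ⟨W, hW⟩ := NonarchimedeanAddGroup.exists_openAddSubgroup_basis M₂
  refine (hM.to_hasBasis (p' := fun _ : ℕ × ℕ => True)
    (s' := fun n => mixedSubgroup (V n.1).toAddSubgroup (W n.2).toAddSubgroup) ?_ ?_)
      |>.isCountablyGenerated
  · rintro U ⟨hU₁, hU₂⟩
    obtain ⟨n, -, hn⟩ := hV.mem_iff.1 (hU₁.mem_nhds U.1.zero_mem)
    obtain ⟨m, -, hm⟩ := hW.mem_iff.1 (hU₂.mem_nhds U.2.zero_mem)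
    exact ⟨(n, m), trivial, mixedSubgroup_mono (fun _ hx => hn hx) (fun _ hx => hm hx)⟩
  · exact fun n _ => ⟨((V n.1).toAddSubgroup, (W n.2).toAddSubgroup),
      ⟨(V n.1).isOpen, (W n.2).isOpen⟩, subset_rfl⟩

lemma IsUniformAddGroup.firstCountableTopology {G : Type*} [AddGroup G] [UniformSpace G]
    [IsUniformAddGroup G] [(𝓝 (0 : G)).IsCountablyGenerated] : FirstCountableTopology G :=
  have := IsUniformAddGroup.uniformity_countably_generated (α := G)
  inferInstance

lemma Topology.IsQuotientMap.exists_addMonoidHom_lift {G H Q : Type*} [AddCommGroup G]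
    [TopologicalSpace G] [AddCommGroup H] [TopologicalSpace H] [AddCommGroup Q]
    [TopologicalSpace Q] {π : G →+ H} (hπ : IsQuotientMap π) (ψ : G →+ Q) (hψ : Continuous ψ)
    (hker : π.ker ≤ ψ.ker) : ∃ φ : H →+ Q, Continuous φ ∧ ∀ x, φ (π x) = ψ x := by
  refine ⟨π.liftOfSurjective hπ.surjective ⟨ψ, hker⟩, ?_, fun x => by simp⟩
  rw [hπ.continuous_iff]
  exact hψ.congr fun x => by simp

section CompletionQuotient

variable {G H : Type*} [AddCommGroup G] [UniformSpace G] [IsUniformAddGroup G]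
  [AddCommGroup H] [UniformSpace H] [IsUniformAddGroup H]

instance UniformSpace.Completion.instFirstCountableTopology [FirstCountableTopology G] :
    FirstCountableTopology (Completion G) := by
  obtain ⟨s, hs⟩ := (𝓝 (0 : G)).exists_antitone_basis
  have := hs.toHasBasis.hasBasis_of_isDenseInducing (Completion.isDenseInducing_coe)
  rw [Completion.coe_zero] at this
  have := this.isCountablyGenerated
  exact IsUniformAddGroup.firstCountableTopology

lemma AddMonoidHom.topologicalClosure_map_ker_le_ker_completion (π : G →+ H)
    (hπ : Continuous π) :
    (π.ker.map (Completion.toCompl : G →+ Completion G)).topologicalClosure ≤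
      (π.completion hπ).ker := by
  refine AddSubgroup.topologicalClosure_minimal _ ?_ ?_
  · rintro _ ⟨x, hx, rfl⟩
    simp [π.mem_ker.1 hx, Completion.coe_zero]
  · exact isClosed_singleton.preimage (π.continuous_completion hπ)

theorem Topology.IsQuotientMap.exists_completion_quotient_equiv [FirstCountableTopology G]
    {π : G →+ H} (hπ : IsQuotientMap π) :
    ∃ e : (Completion G ⧸
        (π.ker.map (Completion.toCompl : G →+ Completion G)).topologicalClosure) ≃+
        Completion H,
      Continuous e ∧ Continuous e.symm ∧
        ∀ x, e (QuotientAddGroup.mk (Completion.toCompl x)) = Completion.toCompl (π x) := by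
  set N := (π.ker.map (Completion.toCompl : G →+ Completion G)).topologicalClosure
  let _ : UniformSpace (Completion G ⧸ N) := IsTopologicalAddGroup.rightUniformSpace _
  have : IsUniformAddGroup (Completion G ⧸ N) := isUniformAddGroup_of_addCommGroup
  have : IsClosed (N : Set (Completion G)) := AddSubgroup.isClosed_topologicalClosure _
  have : CompleteSpace (Completion G ⧸ N) := QuotientAddGroup.completeSpace_right _ N
  have hmk : IsQuotientMap (QuotientAddGroup.mk : Completion G → Completion G ⧸ N) :=
    QuotientAddGroup.isQuotientMap_mk N
  set χ := QuotientAddGroup.lift N (π.completion hπ.continuous)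
    (π.topologicalClosure_map_ker_le_ker_completion hπ.continuous)
  have hχ : Continuous χ := hmk.continuous_iff.2 (π.continuous_completion hπ.continuous)
  obtain ⟨φ, hφ, hφπ⟩ :=
    hπ.exists_addMonoidHom_lift ((QuotientAddGroup.mk' N).comp Completion.toCompl)
      (hmk.continuous.comp Completion.continuous_toCompl) fun x hx =>
        (QuotientAddGroup.eq_zero_iff _).2 (AddSubgroup.le_topologicalClosure _ ⟨x, hx, rfl⟩)
  set ψ := φ.extension hφ
  have hψ : Continuous ψ := φ.continuous_extension hφ
  have hχψ : ∀ y, χ (ψ y) = y := by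
    refine Completion.ext' (hχ.comp hψ) continuous_id fun h => ?_
    obtain ⟨x, rfl⟩ := hπ.surjective h
    simp [ψ, χ, φ.extension_coe hφ, hφπ]
  have hψχ : ∀ z, ψ (χ z) = z := by
    have hdense : DenseRange fun x : G =>
        (QuotientAddGroup.mk (Completion.toCompl x) : Completion G ⧸ N) :=
      QuotientAddGroup.mk_surjective.denseRange.comp Completion.denseRange_coe hmk.continuous
    refine congrFun (hdense.equalizer (hψ.comp hχ) continuous_id (funext fun x => ?_))
    simp [ψ, χ, φ.extension_coe hφ, hφπ]
  exact ⟨{ χ with invFun := ψ, left_inv := hψχ, right_inv := hχψ }, hχ, hψ, fun x => by simp [χ]⟩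

end CompletionQuotient

theorem stmt_19_general {M₁ M₂ : Type}
    [AddCommGroup M₁] [UniformSpace M₁]
    [SecondCountableTopology M₁] [NonarchimedeanAddGroup M₁]
    [AddCommGroup M₂] [UniformSpace M₂]
    [SecondCountableTopology M₂] [NonarchimedeanAddGroup M₂]
    (Λ₁ : AddSubgroup M₁)
    (Λ₂ : AddSubgroup M₂)
    [UniformSpace (M₁ ⊗[ℤ] M₂)] [IsUniformAddGroup (M₁ ⊗[ℤ] M₂)]
    (hbasis : ∀ s : Set (M₁ ⊗[ℤ] M₂), s ∈ nhds (0 : M₁ ⊗[ℤ] M₂) ↔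
      ∃ (U₁ : AddSubgroup M₁) (U₂ : AddSubgroup M₂), IsOpen (U₁ : Set M₁) ∧
        IsOpen (U₂ : Set M₂) ∧ (mixedSubgroup U₁ U₂ : Set (M₁ ⊗[ℤ] M₂)) ⊆ s)
    [UniformSpace ((M₁ ⧸ Λ₁) ⊗[ℤ] (M₂ ⧸ Λ₂))]
    [IsUniformAddGroup ((M₁ ⧸ Λ₁) ⊗[ℤ] (M₂ ⧸ Λ₂))]
    (hbasis' : ∀ s : Set ((M₁ ⧸ Λ₁) ⊗[ℤ] (M₂ ⧸ Λ₂)),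
      s ∈ nhds (0 : (M₁ ⧸ Λ₁) ⊗[ℤ] (M₂ ⧸ Λ₂)) ↔
      ∃ (U₁ : AddSubgroup (M₁ ⧸ Λ₁)) (U₂ : AddSubgroup (M₂ ⧸ Λ₂)),
        IsOpen (U₁ : Set (M₁ ⧸ Λ₁)) ∧ IsOpen (U₂ : Set (M₂ ⧸ Λ₂)) ∧
        (mixedSubgroup U₁ U₂ : Set ((M₁ ⧸ Λ₁) ⊗[ℤ] (M₂ ⧸ Λ₂))) ⊆ s) :
    ∃ e : (Completion (M₁ ⊗[ℤ] M₂) ⧸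
        AddSubgroup.topologicalClosure
          (AddSubgroup.map (Completion.toCompl : (M₁ ⊗[ℤ] M₂) →+ Completion (M₁ ⊗[ℤ] M₂))
            (mixedSubgroup Λ₁ Λ₂)))
      ≃+ Completion ((M₁ ⧸ Λ₁) ⊗[ℤ] (M₂ ⧸ Λ₂)),
      Continuous e ∧ Continuous e.symm ∧
      ∀ (m₁ : M₁) (m₂ : M₂),
        e (QuotientAddGroup.mk (Completion.toCompl (m₁ ⊗ₜ[ℤ] m₂ : M₁ ⊗[ℤ] M₂)))
          = Completion.toCompl
              ((QuotientAddGroup.mk m₁ : M₁ ⧸ Λ₁) ⊗ₜ[ℤ] (QuotientAddGroup.mk m₂ : M₂ ⧸ Λ₂)) := by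
  have hM := HasMixedNhdsBasis.of_mem_nhds_iff hbasis
  have hQ := HasMixedNhdsBasis.of_mem_nhds_iff hbasis'
  have := hM.isCountablyGenerated
  have : FirstCountableTopology (M₁ ⊗[ℤ] M₂) := IsUniformAddGroup.firstCountableTopology
  have hπ : IsOpenQuotientMap ((QuotientAddGroup.mk' Λ₁).tensorMap (QuotientAddGroup.mk' Λ₂)) :=
    ⟨TensorProduct.map_surjective (QuotientAddGroup.mk'_surjective Λ₁)
        (QuotientAddGroup.mk'_surjective Λ₂),
      hM.continuous_tensorMap hQ continuous_quot_mk continuous_quot_mk,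
      hM.isOpenMap_tensorMap hQ (QuotientAddGroup.mk'_surjective Λ₁)
        (QuotientAddGroup.mk'_surjective Λ₂) QuotientAddGroup.isOpenMap_coe
        QuotientAddGroup.isOpenMap_coe⟩
  rw [← ker_tensorMap_mk']
  obtain ⟨e, he, he', hmk⟩ := hπ.isQuotientMap.exists_completion_quotient_equiv
  exact ⟨e, he, he', fun m₁ m₂ => hmk (m₁ ⊗ₜ m₂)⟩

/-- let M₁, M₂ be second-countable prodiscrete abelian groups and
Λᵢ ⊆ Mᵢ closed subgroups. Equip M₁ ⊗ M₂ (and likewise (M₁/Λ₁) ⊗ (M₂/Λ₂)) with the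
linear topology in which the subgroups U₁ ⊗ M₂ + M₁ ⊗ U₂ (for open subgroups Uᵢ ⊆ Mᵢ)
form a neighbourhood basis of 0, and let ⊗̂ denote the corresponding completion. Then the
quotient of M₁ ⊗̂ M₂ by the closure of the image of Λ₁ ⊗ M₂ + M₁ ⊗ Λ₂ is canonically
isomorphic, as a topological group, to (M₁/Λ₁) ⊗̂ (M₂/Λ₂). -/
theorem stmt_19 {M₁ M₂ : Type}
    [AddCommGroup M₁] [UniformSpace M₁] [IsUniformAddGroup M₁] [CompleteSpace M₁]
    [SecondCountableTopology M₁] [NonarchimedeanAddGroup M₁]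
    [AddCommGroup M₂] [UniformSpace M₂] [IsUniformAddGroup M₂] [CompleteSpace M₂]
    [SecondCountableTopology M₂] [NonarchimedeanAddGroup M₂]
    (Λ₁ : AddSubgroup M₁) (hΛ₁ : IsClosed (Λ₁ : Set M₁))
    (Λ₂ : AddSubgroup M₂) (hΛ₂ : IsClosed (Λ₂ : Set M₂))
    [UniformSpace (M₁ ⊗[ℤ] M₂)] [IsUniformAddGroup (M₁ ⊗[ℤ] M₂)]
    (hbasis : ∀ s : Set (M₁ ⊗[ℤ] M₂), s ∈ nhds (0 : M₁ ⊗[ℤ] M₂) ↔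
      ∃ (U₁ : AddSubgroup M₁) (U₂ : AddSubgroup M₂), IsOpen (U₁ : Set M₁) ∧
        IsOpen (U₂ : Set M₂) ∧ (mixedSubgroup U₁ U₂ : Set (M₁ ⊗[ℤ] M₂)) ⊆ s)
    [UniformSpace ((M₁ ⧸ Λ₁) ⊗[ℤ] (M₂ ⧸ Λ₂))]
    [IsUniformAddGroup ((M₁ ⧸ Λ₁) ⊗[ℤ] (M₂ ⧸ Λ₂))]
    (hbasis' : ∀ s : Set ((M₁ ⧸ Λ₁) ⊗[ℤ] (M₂ ⧸ Λ₂)),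
      s ∈ nhds (0 : (M₁ ⧸ Λ₁) ⊗[ℤ] (M₂ ⧸ Λ₂)) ↔
      ∃ (U₁ : AddSubgroup (M₁ ⧸ Λ₁)) (U₂ : AddSubgroup (M₂ ⧸ Λ₂)),
        IsOpen (U₁ : Set (M₁ ⧸ Λ₁)) ∧ IsOpen (U₂ : Set (M₂ ⧸ Λ₂)) ∧
        (mixedSubgroup U₁ U₂ : Set ((M₁ ⧸ Λ₁) ⊗[ℤ] (M₂ ⧸ Λ₂))) ⊆ s) :
    ∃ e : (Completion (M₁ ⊗[ℤ] M₂) ⧸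
        AddSubgroup.topologicalClosure
          (AddSubgroup.map (Completion.toCompl : (M₁ ⊗[ℤ] M₂) →+ Completion (M₁ ⊗[ℤ] M₂))
            (mixedSubgroup Λ₁ Λ₂)))
      ≃+ Completion ((M₁ ⧸ Λ₁) ⊗[ℤ] (M₂ ⧸ Λ₂)),
      Continuous e ∧ Continuous e.symm ∧
      ∀ (m₁ : M₁) (m₂ : M₂),
        e (QuotientAddGroup.mk (Completion.toCompl (m₁ ⊗ₜ[ℤ] m₂ : M₁ ⊗[ℤ] M₂)))
          = Completion.toCompl
              ((QuotientAddGroup.mk m₁ : M₁ ⧸ Λ₁) ⊗ₜ[ℤ] (QuotientAddGroup.mk m₂ : M₂ ⧸ Λ₂)) :=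
  stmt_19_general Λ₁ Λ₂ hbasis hbasis'
end
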